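/- For every choice of bounds Ā, Ē, r̄, M ≥ 0 there exists a constant K ≥ 0 with the following property: whenever A, A' : [0,T] → ℝ^{d×d}, r, r' : [0,T] → ℝ^d, Y, Y' : [0,T] → ℝ^{d'} are continuous with sup_t ‖A(t)‖, sup_t ‖A'(t)‖ ≤ Ā, sup_t ‖r(t)‖, sup_t ‖r'(t)‖ ≤ r̄, and (∫₀ᵀ‖Y‖²)^{1/2}, (∫₀ᵀ‖Y'‖²)^{1/2} ≤ M, and E, E' are solutions of the Riccati ODE for the respective coefficients A, A' with E(0) = E'(0) = Q and sup_t ‖E(t)‖, sup_t ‖E'(t)‖ ≤ Ē, and h, h' are the corresponding adjoint solutions for the data (A, E, r, Y) and (A', E', r', Y') respectively, then for every t ∈ [0,T]: ‖h(t) − h'(t)‖ ≤ K · ((∫₀ᵀ ‖Y(s) − Y'(s)‖² ds)^{1/2} + sup_t ‖A(t) − A'(t)‖ + sup_t ‖r(t) − r'(t)‖). -/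

import Mathlib

/-!
Subtracting the two Riccati equations, `E - E'` solves a linear equation with coefficients of
norm at most `2 (Ā + Ē / |λ|)` and forcing `(A - A')ᵀ E' + E' (A - A')`, so Grönwall gives
`‖E - E'‖ ≲ sup ‖A - A'‖`. The adjoint equation `ḣ = -(Aᵀ + E / λ) h - (Cᵀ Y + E r)` is linear
with coefficient of norm at most `Ā + Ē / |λ|`. Since `Y` is only controlled in `L²`, Grönwall is
used with an integrable forcing term, and Cauchy–Schwarz turns `∫₀ᵀ ‖Y‖` into `√T ‖Y‖_{L²}`; this
bounds `h'` a priori. Finally `h - h'` solves the same linear equation with forcing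
`((A - A')ᵀ + (E - E') / λ) h' + Cᵀ (Y - Y') + (E - E') r + E' (r - r')`, and one more Grönwall
estimate gives the claim.
-/

open Matrix Set intervalIntegral
open scoped Matrix

noncomputable section

def frob {m n : Type*} [Fintype m] [Fintype n] (M : Matrix m n ℝ) : ℝ :=
  Real.sqrt (∑ i, ∑ j, (M i j) ^ 2)

def evnorm {n : Type*} [Fintype n] (v : n → ℝ) : ℝ :=
  Real.sqrt (∑ i, (v i) ^ 2)

open WithLp Real Filter Topology
open MeasureTheory (volume)
open scoped Matrix.Norms.Frobenius

section Norms

variable {m n : Type*} [Fintype m] [Fintype n]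

lemma evnorm_eq_norm (v : n → ℝ) : evnorm v = ‖toLp 2 v‖ := by
  simp [evnorm, EuclideanSpace.norm_eq]

lemma frob_eq_norm (M : Matrix m n ℝ) : frob M = ‖M‖ := by
  simp [frob, frobenius_norm_def, Real.sqrt_eq_rpow]

-- Matrix-valued curves are differentiated through this isometry onto `EuclideanSpace ℝ (m × n)`.
lemma norm_toLp_uncurry (M : Matrix m n ℝ) : ‖toLp 2 (Function.uncurry M)‖ = ‖M‖ := by
  simp [← frob_eq_norm, frob, EuclideanSpace.norm_eq, Fintype.sum_prod_type, Function.uncurry]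

lemma norm_toLp_mulVec_le (M : Matrix m n ℝ) (v : n → ℝ) :
    ‖toLp 2 (M *ᵥ v)‖ ≤ ‖M‖ * ‖toLp 2 v‖ := by
  have h1 : ‖replicateCol (Fin 1) v‖ = ‖toLp 2 v‖ := frobenius_norm_replicateCol v
  have h2 : ‖replicateCol (Fin 1) (M *ᵥ v)‖ = ‖toLp 2 (M *ᵥ v)‖ :=
    frobenius_norm_replicateCol _
  rw [← h1, ← h2, replicateCol_mulVec]
  exact frobenius_norm_mul _ _

lemma hasDerivAt_toLp {ι : Type*} [Fintype ι] {f : ℝ → ι → ℝ} {f' : ι → ℝ} {t : ℝ}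
    (hf : HasDerivAt f f' t) : HasDerivAt (fun s => toLp 2 (f s)) (toLp 2 f') t :=
  (PiLp.hasFDerivAt_toLp 2 (f t)).comp_hasDerivAt t hf

end Norms

lemma hasDerivWithinAt_integral_of_continuousOn {w : ℝ → ℝ} {a b t : ℝ}
    (hw : ContinuousOn w (Icc a b)) (ht : t ∈ Icc a b) :
    HasDerivWithinAt (fun u => ∫ s in a..u, w s) (w t) (Icc a b) t :=
  have : Fact (t ∈ Icc a b) := ⟨ht⟩
  integral_hasDerivWithinAt_right
    ((hw.mono (Icc_subset_Icc_right ht.2)).intervalIntegrable_of_Icc ht.1)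
    (hw.stronglyMeasurableAtFilter_nhdsWithin measurableSet_Icc t) (hw t ht)

section Gronwall

variable {E : Type*} [NormedAddCommGroup E] [NormedSpace ℝ E] {f f' : ℝ → E} {w : ℝ → ℝ}
  {a b L δ : ℝ}

-- Both `δ + ε` and the rate `L + ε` make the barrier dominate `f` strictly.
theorem norm_le_exp_mul_add_integral_of_norm_deriv_le_of_pos (hL : 0 ≤ L)
    (hf : ∀ t ∈ Icc a b, HasDerivWithinAt f (f' t) (Icc a b) t)
    (hw : ContinuousOn w (Icc a b)) (hw0 : ∀ t ∈ Icc a b, 0 ≤ w t) (ha : ‖f a‖ ≤ δ)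
    (bound : ∀ t ∈ Icc a b, ‖f' t‖ ≤ L * ‖f t‖ + w t) {ε : ℝ} (hε : 0 < ε) :
    ∀ t ∈ Icc a b, ‖f t‖ ≤ exp ((L + ε) * (t - a)) * (δ + ε + ∫ s in a..t, w s) := by
  set B : ℝ → ℝ := fun t => exp ((L + ε) * (t - a)) * (δ + ε + ∫ s in a..t, w s)
  have hB : ∀ t ∈ Icc a b, HasDerivWithinAt B
      ((L + ε) * B t + exp ((L + ε) * (t - a)) * w t) (Icc a b) t := by
    intro t ht
    have hexp := (((hasDerivAt_id t).sub_const a).const_mul (L + ε)).exp.hasDerivWithinAt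
      (s := Icc a b)
    refine (hexp.mul ((hasDerivWithinAt_integral_of_continuousOn hw ht).const_add
      (δ + ε))).congr_deriv ?_
    simp only [B, id]
    ring
  refine image_norm_le_of_norm_deriv_right_lt_deriv_boundary'
    (fun t ht => (hf t ht).continuousWithinAt)
    (fun t ht => (hf t (Ico_subset_Icc_self ht)).mono_of_mem_nhdsWithin
      (Icc_mem_nhdsGE_of_mem ht))
    ?_ (fun t ht => (hB t ht).continuousWithinAt)
    (fun t ht => (hB t (Ico_subset_Icc_self ht)).mono_of_mem_nhdsWithin
      (Icc_mem_nhdsGE_of_mem ht))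
    ?_
  · simp only [sub_self, mul_zero, exp_zero, integral_same]
    linarith
  · intro t ht hft
    have ht' := Ico_subset_Icc_self ht
    have hBpos : 0 < B t := by
      have : 0 ≤ ∫ s in a..t, w s :=
        integral_nonneg ht.1 fun s hs => hw0 s ⟨hs.1, hs.2.trans ht'.2⟩
      have := (norm_nonneg _).trans ha
      positivity
    have hw_le : w t ≤ exp ((L + ε) * (t - a)) * w t :=
      le_mul_of_one_le_left (hw0 t ht') (one_le_exp (by nlinarith [ht.1]))
    calc ‖f' t‖ ≤ L * ‖f t‖ + w t := bound t ht'
      _ = L * B t + w t := by rw [hft]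
      _ < (L + ε) * B t + exp ((L + ε) * (t - a)) * w t := by nlinarith

theorem norm_le_exp_mul_add_integral_of_norm_deriv_le (hL : 0 ≤ L)
    (hf : ∀ t ∈ Icc a b, HasDerivWithinAt f (f' t) (Icc a b) t)
    (hw : ContinuousOn w (Icc a b)) (hw0 : ∀ t ∈ Icc a b, 0 ≤ w t) (ha : ‖f a‖ ≤ δ)
    (bound : ∀ t ∈ Icc a b, ‖f' t‖ ≤ L * ‖f t‖ + w t) :
    ∀ t ∈ Icc a b, ‖f t‖ ≤ exp (L * (t - a)) * (δ + ∫ s in a..t, w s) := by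
  intro t ht
  have hcont : Continuous fun ε => exp ((L + ε) * (t - a)) * (δ + ε + ∫ s in a..t, w s) := by
    fun_prop
  refine ge_of_tendsto (x := 𝓝[>] 0)
    (by simpa using (hcont.tendsto 0).mono_left nhdsWithin_le_nhds)
    (eventually_nhdsWithin_of_forall fun ε hε =>
      norm_le_exp_mul_add_integral_of_norm_deriv_le_of_pos hL hf hw hw0 ha bound (ε := ε) hε t ht)

theorem norm_le_exp_mul_add_integral_right_of_norm_deriv_le (hL : 0 ≤ L)
    (hf : ∀ t ∈ Icc a b, HasDerivWithinAt f (f' t) (Icc a b) t)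
    (hw : ContinuousOn w (Icc a b)) (hw0 : ∀ t ∈ Icc a b, 0 ≤ w t) (ha : ‖f a‖ ≤ δ)
    (bound : ∀ t ∈ Icc a b, ‖f' t‖ ≤ L * ‖f t‖ + w t) :
    ∀ t ∈ Icc a b, ‖f t‖ ≤ exp (L * (b - a)) * (δ + ∫ s in a..b, w s) := by
  intro t ht
  refine (norm_le_exp_mul_add_integral_of_norm_deriv_le hL hf hw hw0 ha bound t ht).trans ?_
  have hδ : 0 ≤ δ := (norm_nonneg _).trans ha
  have hI0 : 0 ≤ ∫ s in a..t, w s :=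
    integral_nonneg ht.1 fun s hs => hw0 s ⟨hs.1, hs.2.trans ht.2⟩
  have hIt : ∫ s in a..t, w s ≤ ∫ s in a..b, w s :=
    integral_mono_interval le_rfl ht.1 ht.2
      (MeasureTheory.ae_restrict_of_forall_mem measurableSet_Ioc fun s hs =>
        hw0 s (Ioc_subset_Icc_self hs))
      (hw.intervalIntegrable_of_Icc (ht.1.trans ht.2))
  gcongr
  exact ht.2

end Gronwall

theorem integral_le_sqrt_mul_sqrt_integral_sq {g : ℝ → ℝ} {a b : ℝ} (hab : a ≤ b)
    (hg : IntervalIntegrable g volume a b)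
    (hg2 : IntervalIntegrable (fun s => g s ^ 2) volume a b) :
    ∫ s in a..b, g s ≤ √(b - a) * √(∫ s in a..b, g s ^ 2) := by
  set I := ∫ s in a..b, g s
  set J := ∫ s in a..b, g s ^ 2
  -- expand `0 ≤ ∫ ((b - a) g - I)²`
  have hexpand : ∫ s in a..b, ((b - a) * g s - I) ^ 2 = (b - a) * ((b - a) * J - I ^ 2) := by
    have hpt : ∀ s, ((b - a) * g s - I) ^ 2 =
        (b - a) ^ 2 * g s ^ 2 - 2 * (b - a) * I * g s + I ^ 2 := fun s => by ring
    simp only [hpt]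
    rw [integral_add ((hg2.const_mul _).sub (hg.const_mul _)) intervalIntegrable_const,
      integral_sub (hg2.const_mul _) (hg.const_mul _), integral_const_mul, integral_const_mul,
      integral_const, smul_eq_mul]
    ring
  have hsq : I ^ 2 ≤ (b - a) * J := by
    rcases hab.eq_or_lt with rfl | hlt
    · simp [I]
    · have := hexpand ▸ integral_nonneg hab fun s _ => sq_nonneg ((b - a) * g s - I)
      nlinarith [sub_pos.2 hlt]
  calc I ≤ √(I ^ 2) := le_sqrt_of_sq_le le_rfl
    _ ≤ √((b - a) * J) := sqrt_le_sqrt hsq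
    _ = √(b - a) * √J := sqrt_mul (sub_nonneg.2 hab) _

theorem integral_mul_add_le {u : ℝ → ℝ} {a b c k S : ℝ} (hab : a ≤ b)
    (hu : ContinuousOn u (Icc a b)) (hc : 0 ≤ c) (hS : √(∫ s in a..b, u s ^ 2) ≤ S) :
    ∫ s in a..b, (c * u s + k) ≤ c * (√(b - a) * S) + (b - a) * k := by
  have hui := hu.intervalIntegrable_of_Icc (μ := volume) hab
  have hcs := integral_le_sqrt_mul_sqrt_integral_sq hab hui
    ((hu.pow 2).intervalIntegrable_of_Icc hab)
  rw [integral_add (hui.const_mul c) intervalIntegrable_const, integral_const_mul,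
    integral_const, smul_eq_mul]
  gcongr
  exact hcs.trans (mul_le_mul_of_nonneg_left hS (sqrt_nonneg _))

section Riccati

variable {ι κ : Type*} [Fintype ι] [Fintype κ]

def riccatiRHS (C : Matrix κ ι ℝ) (lam : ℝ) (A E : Matrix ι ι ℝ) : Matrix ι ι ℝ :=
  Cᵀ * C - Aᵀ * E - E * A - (1 / lam) • (E * E)

def adjointRHS (C : Matrix κ ι ℝ) (lam : ℝ) (A E : Matrix ι ι ℝ) (r : ι → ℝ) (y : κ → ℝ)
    (h : ι → ℝ) : ι → ℝ :=
  -((Aᵀ + (1 / lam) • E) *ᵥ h) - (Cᵀ *ᵥ y + E *ᵥ r)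

lemma riccatiRHS_sub (C : Matrix κ ι ℝ) (lam : ℝ) (A A' E E' : Matrix ι ι ℝ) :
    riccatiRHS C lam A E - riccatiRHS C lam A' E' =
      -(Aᵀ * (E - E') + (E - E') * A) - ((A - A')ᵀ * E' + E' * (A - A'))
        - (1 / lam) • (E * (E - E') + (E - E') * E') := by
  simp only [riccatiRHS, transpose_sub, Matrix.sub_mul, Matrix.mul_sub, smul_sub, smul_add]
  module

lemma adjointRHS_sub (C : Matrix κ ι ℝ) (lam : ℝ) (A A' E E' : Matrix ι ι ℝ)
    (r r' h h' : ι → ℝ) (y y' : κ → ℝ) :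
    adjointRHS C lam A E r y h - adjointRHS C lam A' E' r' y' h' =
      -((Aᵀ + (1 / lam) • E) *ᵥ (h - h'))
        + -(((A - A')ᵀ + (1 / lam) • (E - E')) *ᵥ h' + Cᵀ *ᵥ (y - y')
          + ((E - E') *ᵥ r + E' *ᵥ (r - r'))) := by
  simp only [adjointRHS, transpose_sub, Matrix.add_mulVec, Matrix.sub_mulVec, Matrix.mulVec_sub,
    Matrix.smul_mulVec, smul_sub]
  module

lemma norm_transpose_add_smul_le (lam : ℝ) (A E : Matrix ι ι ℝ) :
    ‖Aᵀ + (1 / lam) • E‖ ≤ ‖A‖ + |lam|⁻¹ * ‖E‖ := by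
  simpa [norm_smul, frobenius_norm_transpose] using norm_add_le Aᵀ ((1 / lam) • E)

lemma norm_riccatiRHS_sub_le (C : Matrix κ ι ℝ) (lam : ℝ) (A A' E E' : Matrix ι ι ℝ) :
    ‖riccatiRHS C lam A E - riccatiRHS C lam A' E'‖ ≤
      (2 * ‖A‖ + |lam|⁻¹ * (‖E‖ + ‖E'‖)) * ‖E - E'‖ + 2 * ‖E'‖ * ‖A - A'‖ := by
  have hmul := frobenius_norm_mul (l := ι) (m := ι) (n := ι) (α := ℝ)
  have htr : ∀ M : Matrix ι ι ℝ, ‖Mᵀ‖ = ‖M‖ := frobenius_norm_transpose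
  have h1 : ‖Aᵀ * (E - E') + (E - E') * A‖ ≤ 2 * ‖A‖ * ‖E - E'‖ := by
    calc _ ≤ ‖Aᵀ‖ * ‖E - E'‖ + ‖E - E'‖ * ‖A‖ :=
          (norm_add_le _ _).trans (add_le_add (hmul _ _) (hmul _ _))
      _ = _ := by rw [htr]; ring
  have h2 : ‖(A - A')ᵀ * E' + E' * (A - A')‖ ≤ 2 * ‖E'‖ * ‖A - A'‖ := by
    calc _ ≤ ‖(A - A')ᵀ‖ * ‖E'‖ + ‖E'‖ * ‖A - A'‖ :=
          (norm_add_le _ _).trans (add_le_add (hmul _ _) (hmul _ _))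
      _ = _ := by rw [htr]; ring
  have h3 : ‖(1 / lam) • (E * (E - E') + (E - E') * E')‖ ≤
      |lam|⁻¹ * ((‖E‖ + ‖E'‖) * ‖E - E'‖) := by
    rw [norm_smul, norm_div, norm_one, Real.norm_eq_abs, one_div]
    gcongr
    refine (norm_add_le _ _).trans ?_
    nlinarith [hmul E (E - E'), hmul (E - E') E']
  rw [riccatiRHS_sub]
  refine (norm_sub_le_of_le (norm_sub_le_of_le (norm_neg _).le le_rfl) le_rfl).trans ?_
  linarith

theorem norm_sub_le_of_riccati {C : Matrix κ ι ℝ} {lam T Abar Ebar ΔA : ℝ}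
    {A A' E E' : ℝ → Matrix ι ι ℝ} (hAbar : 0 ≤ Abar) (hEbar : 0 ≤ Ebar)
    (hA : ∀ t ∈ Icc 0 T, ‖A t‖ ≤ Abar) (hE : ∀ t ∈ Icc 0 T, ‖E t‖ ≤ Ebar)
    (hE' : ∀ t ∈ Icc 0 T, ‖E' t‖ ≤ Ebar) (hΔA : ∀ t ∈ Icc 0 T, ‖A t - A' t‖ ≤ ΔA)
    (h0 : E 0 = E' 0)
    (hEd : ∀ t ∈ Icc 0 T, ∀ i j,
      HasDerivAt (fun s => E s i j) (riccatiRHS C lam (A t) (E t) i j) t)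
    (hE'd : ∀ t ∈ Icc 0 T, ∀ i j,
      HasDerivAt (fun s => E' s i j) (riccatiRHS C lam (A' t) (E' t) i j) t) :
    ∀ t ∈ Icc 0 T,
      ‖E t - E' t‖ ≤ exp (2 * (Abar + |lam|⁻¹ * Ebar) * T) * (2 * Ebar * T) * ΔA := by
  have hd : ∀ t ∈ Icc 0 T, HasDerivWithinAt (fun s => toLp 2 (Function.uncurry (E s - E' s)))
      (toLp 2 (Function.uncurry (riccatiRHS C lam (A t) (E t) - riccatiRHS C lam (A' t) (E' t))))
      (Icc 0 T) t := fun t ht =>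
    (hasDerivAt_toLp (hasDerivAt_pi.2 fun p : ι × ι =>
      (hEd t ht p.1 p.2).sub (hE'd t ht p.1 p.2))).hasDerivWithinAt
  have hbound : ∀ t ∈ Icc 0 T,
      ‖toLp 2 (Function.uncurry (riccatiRHS C lam (A t) (E t) - riccatiRHS C lam (A' t) (E' t)))‖
        ≤ 2 * (Abar + |lam|⁻¹ * Ebar) * ‖toLp 2 (Function.uncurry (E t - E' t))‖
          + 2 * Ebar * ΔA := by
    intro t ht
    simp only [norm_toLp_uncurry]
    calc _ ≤ _ := norm_riccatiRHS_sub_le C lam (A t) (A' t) (E t) (E' t)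
      _ ≤ (2 * Abar + |lam|⁻¹ * (Ebar + Ebar)) * ‖E t - E' t‖ + 2 * Ebar * ΔA := by
          gcongr
          exacts [hA t ht, hE t ht, hE' t ht, hE' t ht, hΔA t ht]
      _ = _ := by ring
  have := norm_le_exp_mul_add_integral_right_of_norm_deriv_le (δ := 0) (by positivity) hd
    continuousOn_const
    (fun t ht => mul_nonneg (by positivity) ((norm_nonneg _).trans (hΔA t ht)))
    (by rw [h0, sub_self, norm_toLp_uncurry, norm_zero]) hbound
  intro t ht
  simpa [norm_toLp_uncurry, mul_comm, mul_assoc, mul_left_comm] using this t ht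

theorem norm_le_of_hasDerivAt_neg_mulVec_add {x g : ℝ → ι → ℝ} {P : ℝ → Matrix ι ι ℝ}
    {u : ℝ → ℝ} {T L c k S : ℝ} (hT : 0 ≤ T) (hL : 0 ≤ L) (hc : 0 ≤ c)
    (hx : ∀ t ∈ Icc 0 T, HasDerivAt x (-(P t *ᵥ x t) + g t) t) (hx0 : x 0 = 0)
    (hP : ∀ t ∈ Icc 0 T, ‖P t‖ ≤ L) (hg : ∀ t ∈ Icc 0 T, ‖toLp 2 (g t)‖ ≤ c * u t + k)
    (hu : ContinuousOn u (Icc 0 T)) (hS : √(∫ s in 0..T, u s ^ 2) ≤ S) :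
    ∀ t ∈ Icc 0 T, ‖toLp 2 (x t)‖ ≤ exp (L * T) * (c * (√T * S) + T * k) := by
  have hbound : ∀ t ∈ Icc 0 T,
      ‖toLp 2 (-(P t *ᵥ x t) + g t)‖ ≤ L * ‖toLp 2 (x t)‖ + (c * u t + k) := by
    intro t ht
    rw [toLp_add, toLp_neg]
    refine (norm_add_le _ _).trans (add_le_add ?_ (hg t ht))
    rw [norm_neg]
    exact (norm_toLp_mulVec_le _ _).trans (by gcongr; exact hP t ht)
  have := norm_le_exp_mul_add_integral_right_of_norm_deriv_le (δ := 0) hL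
    (fun t ht => (hasDerivAt_toLp (hx t ht)).hasDerivWithinAt)
    ((continuousOn_const.mul hu).add continuousOn_const)
    (fun t ht => (norm_nonneg _).trans (hg t ht)) (by simp [hx0]) hbound
  intro t ht
  refine (this t ht).trans ?_
  rw [sub_zero, zero_add]
  gcongr
  simpa using integral_mul_add_le hT hu hc (by simpa using hS) (k := k)

theorem norm_adjoint_le {C : Matrix κ ι ℝ} {lam T Abar Ebar rbar M : ℝ}
    {A E : ℝ → Matrix ι ι ℝ} {r h : ℝ → ι → ℝ} {y : ℝ → κ → ℝ}
    (hT : 0 ≤ T) (hAbar : 0 ≤ Abar) (hEbar : 0 ≤ Ebar)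
    (hA : ∀ t ∈ Icc 0 T, ‖A t‖ ≤ Abar) (hE : ∀ t ∈ Icc 0 T, ‖E t‖ ≤ Ebar)
    (hr : ∀ t ∈ Icc 0 T, ‖toLp 2 (r t)‖ ≤ rbar)
    (hy : ContinuousOn y (Icc 0 T)) (hyM : √(∫ s in 0..T, ‖toLp 2 (y s)‖ ^ 2) ≤ M)
    (h0 : h 0 = 0)
    (hh : ∀ t ∈ Icc 0 T, HasDerivAt h (adjointRHS C lam (A t) (E t) (r t) (y t) (h t)) t) :
    ∀ t ∈ Icc 0 T, ‖toLp 2 (h t)‖ ≤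
      exp ((Abar + |lam|⁻¹ * Ebar) * T) * (‖C‖ * (√T * M) + T * (Ebar * rbar)) := by
  refine norm_le_of_hasDerivAt_neg_mulVec_add (g := fun t => -(Cᵀ *ᵥ y t + E t *ᵥ r t))
    hT (by positivity) (norm_nonneg C) (fun t ht => (hh t ht).congr_deriv (sub_eq_add_neg _ _))
    h0 (fun t ht => (norm_transpose_add_smul_le _ _ _).trans ?_) (fun t ht => ?_)
    ((PiLp.continuous_toLp _ _).comp_continuousOn hy).norm hyM
  · gcongr
    exacts [hA t ht, hE t ht]
  · have hCt : ‖Cᵀ‖ = ‖C‖ := frobenius_norm_transpose C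
    rw [toLp_neg, norm_neg, toLp_add]
    refine (norm_add_le _ _).trans (add_le_add ?_ ?_)
    · exact hCt ▸ norm_toLp_mulVec_le _ _
    · exact (norm_toLp_mulVec_le _ _).trans
        (mul_le_mul (hE t ht) (hr t ht) (norm_nonneg _) hEbar)

theorem norm_adjoint_sub_le {C : Matrix κ ι ℝ} {lam T Abar Ebar rbar ΔA ΔE Δr H S : ℝ}
    {A A' E E' : ℝ → Matrix ι ι ℝ} {r r' h h' : ℝ → ι → ℝ} {y y' : ℝ → κ → ℝ}
    (hT : 0 ≤ T) (hAbar : 0 ≤ Abar) (hEbar : 0 ≤ Ebar)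
    (hA : ∀ t ∈ Icc 0 T, ‖A t‖ ≤ Abar) (hE : ∀ t ∈ Icc 0 T, ‖E t‖ ≤ Ebar)
    (hE' : ∀ t ∈ Icc 0 T, ‖E' t‖ ≤ Ebar) (hr : ∀ t ∈ Icc 0 T, ‖toLp 2 (r t)‖ ≤ rbar)
    (hΔA : ∀ t ∈ Icc 0 T, ‖A t - A' t‖ ≤ ΔA) (hΔE : ∀ t ∈ Icc 0 T, ‖E t - E' t‖ ≤ ΔE)
    (hΔr : ∀ t ∈ Icc 0 T, ‖toLp 2 (r t - r' t)‖ ≤ Δr)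
    (hH : ∀ t ∈ Icc 0 T, ‖toLp 2 (h' t)‖ ≤ H)
    (hy : ContinuousOn y (Icc 0 T)) (hy' : ContinuousOn y' (Icc 0 T))
    (hS : √(∫ s in 0..T, ‖toLp 2 (y s - y' s)‖ ^ 2) ≤ S) (h0 : h 0 = 0) (h'0 : h' 0 = 0)
    (hh : ∀ t ∈ Icc 0 T, HasDerivAt h (adjointRHS C lam (A t) (E t) (r t) (y t) (h t)) t)
    (hh' : ∀ t ∈ Icc 0 T,
      HasDerivAt h' (adjointRHS C lam (A' t) (E' t) (r' t) (y' t) (h' t)) t) :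
    ∀ t ∈ Icc 0 T, ‖toLp 2 (h t - h' t)‖ ≤ exp ((Abar + |lam|⁻¹ * Ebar) * T) *
      (‖C‖ * (√T * S) + T * ((ΔA + |lam|⁻¹ * ΔE) * H + ΔE * rbar + Ebar * Δr)) := by
  refine norm_le_of_hasDerivAt_neg_mulVec_add hT (by positivity) (norm_nonneg C)
    (fun t ht => ((hh t ht).sub (hh' t ht)).congr_deriv (adjointRHS_sub ..))
    (by simp [h0, h'0])
    (fun t ht => (norm_transpose_add_smul_le _ _ _).trans ?_) (fun t ht => ?_)
    (((PiLp.continuous_toLp _ _).comp_continuousOn (hy.sub hy')).norm) hS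
  · gcongr
    exacts [hA t ht, hE t ht]
  · have hCt : ‖Cᵀ‖ = ‖C‖ := frobenius_norm_transpose C
    have hΔA0 : 0 ≤ ΔA := (norm_nonneg _).trans (hΔA t ht)
    have hΔE0 : 0 ≤ ΔE := (norm_nonneg _).trans (hΔE t ht)
    have hcoef := (norm_transpose_add_smul_le lam (A t - A' t) (E t - E' t)).trans
      (add_le_add (hΔA t ht)
        (mul_le_mul_of_nonneg_left (hΔE t ht) (inv_nonneg.2 (abs_nonneg lam))))
    simp only [toLp_neg, norm_neg, toLp_add]
    refine (norm_add₃_le ..).trans ?_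
    have h1 := (norm_toLp_mulVec_le _ _).trans
      (mul_le_mul hcoef (hH t ht) (norm_nonneg _) (by positivity))
    have h2 := hCt ▸ norm_toLp_mulVec_le Cᵀ (y t - y' t)
    have h3 := (norm_add_le _ _).trans (add_le_add
      ((norm_toLp_mulVec_le _ _).trans
        (mul_le_mul (hΔE t ht) (hr t ht) (norm_nonneg _) hΔE0))
      ((norm_toLp_mulVec_le _ _).trans
        (mul_le_mul (hE' t ht) (hΔr t ht) (norm_nonneg _) hEbar)))
    linarith

-- `L` bounds `‖Aᵀ + E / λ‖`, `KE * sup ‖A - A'‖` bounds `‖E - E'‖` (`norm_sub_le_of_riccati`)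
-- and `H` bounds the adjoint state (`norm_adjoint_le`).
def stabilityConst (C : Matrix κ ι ℝ) (lam T Abar Ebar rbar M : ℝ) : ℝ :=
  let L := Abar + |lam|⁻¹ * Ebar
  let KE := exp (2 * L * T) * (2 * Ebar * T)
  let H := exp (L * T) * (‖C‖ * (√T * M) + T * (Ebar * rbar))
  exp (L * T) * (‖C‖ * √T + T * ((1 + |lam|⁻¹ * KE) * H + KE * rbar + Ebar))

lemma stabilityConst_nonneg (C : Matrix κ ι ℝ) (lam Abar : ℝ) {T Ebar rbar M : ℝ} (hT : 0 ≤ T)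
    (hEbar : 0 ≤ Ebar) (hrbar : 0 ≤ rbar) (hM : 0 ≤ M) :
    0 ≤ stabilityConst C lam T Abar Ebar rbar M := by
  unfold stabilityConst
  positivity

theorem norm_adjoint_sub_le_stabilityConst_mul {C : Matrix κ ι ℝ}
    {lam T Abar Ebar rbar M ΔA Δr S : ℝ} {A A' E E' : ℝ → Matrix ι ι ℝ}
    {r r' h h' : ℝ → ι → ℝ} {y y' : ℝ → κ → ℝ} (hT : 0 ≤ T) (hAbar : 0 ≤ Abar)
    (hEbar : 0 ≤ Ebar) (hrbar : 0 ≤ rbar) (hM : 0 ≤ M) (hA : ∀ t ∈ Icc 0 T, ‖A t‖ ≤ Abar) (hA' : ∀ t ∈ Icc 0 T, ‖A' t‖ ≤ Abar)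
    (hE : ∀ t ∈ Icc 0 T, ‖E t‖ ≤ Ebar) (hE' : ∀ t ∈ Icc 0 T, ‖E' t‖ ≤ Ebar)
    (hr : ∀ t ∈ Icc 0 T, ‖toLp 2 (r t)‖ ≤ rbar) (hr' : ∀ t ∈ Icc 0 T, ‖toLp 2 (r' t)‖ ≤ rbar)
    (hy : ContinuousOn y (Icc 0 T)) (hy' : ContinuousOn y' (Icc 0 T))
    (hy'M : √(∫ s in 0..T, ‖toLp 2 (y' s)‖ ^ 2) ≤ M)
    (hS : √(∫ s in 0..T, ‖toLp 2 (y s - y' s)‖ ^ 2) ≤ S)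
    (hΔA : ∀ t ∈ Icc 0 T, ‖A t - A' t‖ ≤ ΔA) (hΔr : ∀ t ∈ Icc 0 T, ‖toLp 2 (r t - r' t)‖ ≤ Δr)
    (hE0 : E 0 = E' 0)
    (hEd : ∀ t ∈ Icc 0 T, ∀ i j,
      HasDerivAt (fun s => E s i j) (riccatiRHS C lam (A t) (E t) i j) t)
    (hE'd : ∀ t ∈ Icc 0 T, ∀ i j,
      HasDerivAt (fun s => E' s i j) (riccatiRHS C lam (A' t) (E' t) i j) t)
    (h0 : h 0 = 0) (h'0 : h' 0 = 0)
    (hh : ∀ t ∈ Icc 0 T, HasDerivAt h (adjointRHS C lam (A t) (E t) (r t) (y t) (h t)) t)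
    (hh' : ∀ t ∈ Icc 0 T,
      HasDerivAt h' (adjointRHS C lam (A' t) (E' t) (r' t) (y' t) (h' t)) t) :
    ∀ t ∈ Icc 0 T,
      ‖toLp 2 (h t - h' t)‖ ≤ stabilityConst C lam T Abar Ebar rbar M * (S + ΔA + Δr) := by
  intro t ht
  set L := Abar + |lam|⁻¹ * Ebar
  set KE := exp (2 * L * T) * (2 * Ebar * T)
  set H := exp (L * T) * (‖C‖ * (√T * M) + T * (Ebar * rbar))
  have hΔE : ∀ t ∈ Icc 0 T, ‖E t - E' t‖ ≤ KE * ΔA :=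
    norm_sub_le_of_riccati hAbar hEbar hA hE hE' hΔA hE0 hEd hE'd
  have hH : ∀ t ∈ Icc 0 T, ‖toLp 2 (h' t)‖ ≤ H :=
    norm_adjoint_le hT hAbar hEbar hA' hE' hr' hy' hy'M h'0 hh'
  have key : ‖toLp 2 (h t - h' t)‖ ≤ exp (L * T) *
      (‖C‖ * (√T * S) + T * ((ΔA + |lam|⁻¹ * (KE * ΔA)) * H + KE * ΔA * rbar + Ebar * Δr)) :=
    norm_adjoint_sub_le hT hAbar hEbar hA hE hE' hr hΔA hΔE hΔr hH hy hy' hS h0 h'0 hh hh' t ht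
  have hΔA0 : 0 ≤ ΔA := (norm_nonneg _).trans (hΔA t ht)
  have hΔr0 : 0 ≤ Δr := (norm_nonneg _).trans (hΔr t ht)
  have hS0 : 0 ≤ S := (sqrt_nonneg _).trans hS
  have hH0 : 0 ≤ H := by positivity
  refine key.trans ?_
  rw [stabilityConst, mul_assoc (exp (L * T))]
  gcongr
  nlinarith [mul_nonneg (mul_nonneg (norm_nonneg C) (sqrt_nonneg T)) (add_nonneg hΔA0 hΔr0),
    mul_nonneg (mul_nonneg hT (by positivity : 0 ≤ (1 + |lam|⁻¹ * KE) * H + KE * rbar))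
      (add_nonneg hS0 hΔr0),
    mul_nonneg (mul_nonneg hT hEbar) (add_nonneg hS0 hΔA0)]

end Riccati

theorem statement10_general
    (d d' : ℕ) (T : ℝ) (hT : 0 < T) (lam : ℝ)
    (C : Matrix (Fin d') (Fin d) ℝ)
    (Q : Matrix (Fin d) (Fin d) ℝ) :
    ∀ Abar Ebar rbar M : ℝ, 0 ≤ Abar → 0 ≤ Ebar → 0 ≤ rbar → 0 ≤ M →
    ∃ K : ℝ, 0 ≤ K ∧
      ∀ (A A' : ℝ → Matrix (Fin d) (Fin d) ℝ)
        (r r' : ℝ → Fin d → ℝ) (Y Y' : ℝ → Fin d' → ℝ)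
        (E E' : ℝ → Matrix (Fin d) (Fin d) ℝ)
        (h h' : ℝ → Fin d → ℝ),
        (∀ i j, ContinuousOn (fun t => A t i j) (Icc 0 T)) →
        (∀ i j, ContinuousOn (fun t => A' t i j) (Icc 0 T)) →
        (∀ i, ContinuousOn (fun t => r t i) (Icc 0 T)) →
        (∀ i, ContinuousOn (fun t => r' t i) (Icc 0 T)) →
        (∀ i, ContinuousOn (fun t => Y t i) (Icc 0 T)) →
        (∀ i, ContinuousOn (fun t => Y' t i) (Icc 0 T)) →
        (∀ t ∈ Icc (0:ℝ) T, frob (A t) ≤ Abar) →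
        (∀ t ∈ Icc (0:ℝ) T, frob (A' t) ≤ Abar) →
        (∀ t ∈ Icc (0:ℝ) T, evnorm (r t) ≤ rbar) →
        (∀ t ∈ Icc (0:ℝ) T, evnorm (r' t) ≤ rbar) →
        Real.sqrt (∫ s in (0:ℝ)..T, evnorm (Y s) ^ 2) ≤ M →
        Real.sqrt (∫ s in (0:ℝ)..T, evnorm (Y' s) ^ 2) ≤ M →
        E 0 = Q → E' 0 = Q →
        (∀ t ∈ Icc (0:ℝ) T, ∀ i j,
          HasDerivAt (fun s => E s i j)
            ((Cᵀ * C - (A t)ᵀ * E t - E t * A t - (1 / lam) • (E t * E t)) i j) t) →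
        (∀ t ∈ Icc (0:ℝ) T, ∀ i j,
          HasDerivAt (fun s => E' s i j)
            ((Cᵀ * C - (A' t)ᵀ * E' t - E' t * A' t - (1 / lam) • (E' t * E' t)) i j) t) →
        (∀ t ∈ Icc (0:ℝ) T, frob (E t) ≤ Ebar) →
        (∀ t ∈ Icc (0:ℝ) T, frob (E' t) ≤ Ebar) →
        h 0 = 0 → h' 0 = 0 →
        (∀ t ∈ Icc (0:ℝ) T, ∀ i,
          HasDerivAt (fun s => h s i)
            ((-(((A t)ᵀ + (1 / lam) • E t).mulVec (h t))
              - (Cᵀ.mulVec (Y t) + (E t).mulVec (r t))) i) t) →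
        (∀ t ∈ Icc (0:ℝ) T, ∀ i,
          HasDerivAt (fun s => h' s i)
            ((-(((A' t)ᵀ + (1 / lam) • E' t).mulVec (h' t))
              - (Cᵀ.mulVec (Y' t) + (E' t).mulVec (r' t))) i) t) →
        ∀ t ∈ Icc (0:ℝ) T,
          evnorm (h t - h' t) ≤
            K * (Real.sqrt (∫ s in (0:ℝ)..T, evnorm (Y s - Y' s) ^ 2)
              + (⨆ s : Icc (0:ℝ) T, frob (A s - A' s))
              + (⨆ s : Icc (0:ℝ) T, evnorm (r s - r' s))) := by
  intro Abar Ebar rbar M hAbar hEbar hrbar hM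
  refine ⟨stabilityConst C lam T Abar Ebar rbar M,
    stabilityConst_nonneg C lam Abar hT.le hEbar hrbar hM, ?_⟩
  intro A A' r r' Y Y' E E' h h' _ _ _ _ hY hY' hA hA' hr hr' _ hY'M hE0 hE'0 hE hE' hEb hE'b
    hh0 hh'0 hh hh'
  simp only [frob_eq_norm, evnorm_eq_norm] at *
  have hΔA : ∀ t ∈ Icc 0 T, ‖A t - A' t‖ ≤ ⨆ s : Icc (0:ℝ) T, ‖A s - A' s‖ := fun t ht =>
    le_ciSup_set ⟨2 * Abar, forall_mem_image.2 fun s hs =>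
      (norm_sub_le _ _).trans (by linarith [hA s hs, hA' s hs])⟩ ht
  have hΔr : ∀ t ∈ Icc 0 T, ‖toLp 2 (r t - r' t)‖ ≤ ⨆ s : Icc (0:ℝ) T, ‖toLp 2 (r s - r' s)‖ :=
    fun t ht => le_ciSup_set ⟨2 * rbar, forall_mem_image.2 fun s hs =>
      (toLp_sub 2 (r s) (r' s) ▸ norm_sub_le _ _).trans (by linarith [hr s hs, hr' s hs])⟩ ht
  exact norm_adjoint_sub_le_stabilityConst_mul hT.le hAbar hEbar hrbar hM hA hA' hEb hE'b hr hr'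
    (continuousOn_pi.2 hY) (continuousOn_pi.2 hY') hY'M le_rfl hΔA hΔr (hE0.trans hE'0.symm)
    hE hE' hh0 hh'0 (fun t ht => hasDerivAt_pi.2 (hh t ht)) (fun t ht => hasDerivAt_pi.2 (hh' t ht))

/-- joint Lipschitz-type stability of the adjoint variable `h` in the
data `(A, r, Y)`: for any a priori bounds `Ā, Ē, r̄, M ≥ 0` there is a constant
`K ≥ 0` such that
`‖h(t) − h'(t)‖ ≤ K ((∫₀ᵀ‖Y−Y'‖²)^{1/2} + sup_t ‖A(t)−A'(t)‖ + sup_t ‖r(t)−r'(t)‖)`. -/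
theorem statement10
    (d d' : ℕ) (hd : 1 ≤ d) (hd' : 1 ≤ d') (T : ℝ) (hT : 0 < T) (lam : ℝ) (hlam : 0 < lam)
    (C : Matrix (Fin d') (Fin d) ℝ)
    (Q : Matrix (Fin d) (Fin d) ℝ) (hQ : Q.PosSemidef) :
    ∀ Abar Ebar rbar M : ℝ, 0 ≤ Abar → 0 ≤ Ebar → 0 ≤ rbar → 0 ≤ M →
    ∃ K : ℝ, 0 ≤ K ∧
      ∀ (A A' : ℝ → Matrix (Fin d) (Fin d) ℝ)
        (r r' : ℝ → Fin d → ℝ) (Y Y' : ℝ → Fin d' → ℝ)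
        (E E' : ℝ → Matrix (Fin d) (Fin d) ℝ)
        (h h' : ℝ → Fin d → ℝ),
        (∀ i j, ContinuousOn (fun t => A t i j) (Icc 0 T)) →
        (∀ i j, ContinuousOn (fun t => A' t i j) (Icc 0 T)) →
        (∀ i, ContinuousOn (fun t => r t i) (Icc 0 T)) →
        (∀ i, ContinuousOn (fun t => r' t i) (Icc 0 T)) →
        (∀ i, ContinuousOn (fun t => Y t i) (Icc 0 T)) →
        (∀ i, ContinuousOn (fun t => Y' t i) (Icc 0 T)) →
        (∀ t ∈ Icc (0:ℝ) T, frob (A t) ≤ Abar) →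
        (∀ t ∈ Icc (0:ℝ) T, frob (A' t) ≤ Abar) →
        (∀ t ∈ Icc (0:ℝ) T, evnorm (r t) ≤ rbar) →
        (∀ t ∈ Icc (0:ℝ) T, evnorm (r' t) ≤ rbar) →
        Real.sqrt (∫ s in (0:ℝ)..T, evnorm (Y s) ^ 2) ≤ M →
        Real.sqrt (∫ s in (0:ℝ)..T, evnorm (Y' s) ^ 2) ≤ M →
        E 0 = Q → E' 0 = Q →
        (∀ t ∈ Icc (0:ℝ) T, ∀ i j,
          HasDerivAt (fun s => E s i j)
            ((Cᵀ * C - (A t)ᵀ * E t - E t * A t - (1 / lam) • (E t * E t)) i j) t) →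
        (∀ t ∈ Icc (0:ℝ) T, ∀ i j,
          HasDerivAt (fun s => E' s i j)
            ((Cᵀ * C - (A' t)ᵀ * E' t - E' t * A' t - (1 / lam) • (E' t * E' t)) i j) t) →
        (∀ t ∈ Icc (0:ℝ) T, frob (E t) ≤ Ebar) →
        (∀ t ∈ Icc (0:ℝ) T, frob (E' t) ≤ Ebar) →
        h 0 = 0 → h' 0 = 0 →
        (∀ t ∈ Icc (0:ℝ) T, ∀ i,
          HasDerivAt (fun s => h s i)
            ((-(((A t)ᵀ + (1 / lam) • E t).mulVec (h t))
              - (Cᵀ.mulVec (Y t) + (E t).mulVec (r t))) i) t) →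
        (∀ t ∈ Icc (0:ℝ) T, ∀ i,
          HasDerivAt (fun s => h' s i)
            ((-(((A' t)ᵀ + (1 / lam) • E' t).mulVec (h' t))
              - (Cᵀ.mulVec (Y' t) + (E' t).mulVec (r' t))) i) t) →
        ∀ t ∈ Icc (0:ℝ) T,
          evnorm (h t - h' t) ≤
            K * (Real.sqrt (∫ s in (0:ℝ)..T, evnorm (Y s - Y' s) ^ 2)
              + (⨆ s : Icc (0:ℝ) T, frob (A s - A' s))
              + (⨆ s : Icc (0:ℝ) T, evnorm (r s - r' s))) :=
  statement10_general d d' T hT lam C Q
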